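/- arXiv:1409.6376 — 3 statements merged into one kernel-verified Lean document; each statement's English description precedes it below -/
import Mathlib

section
/- The Lie algebras L_μ and L_ν are isomorphic if and only if μ = ν or μ = ν⁻¹. -/
/-!
If `e : L_μ ≃ L_ν` and `t` is the `β`-coordinate of `e β`, then `ad (e β)` is triangular with
diagonal `(t, t ν, 0)` while `ad β` has diagonal `(1, μ, 0)`. Since `ad (e β)` is conjugate to
`ad β`, comparing `tr ad` and the Killing form `tr (ad ∘ ad)` gives `{t, t ν} = {1, μ}`, i.e.
`μ = ν` or `μ ν = 1`. Conversely, swapping `α₁, α₂` and rescaling `β` by `ν⁻¹` turns the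
standard basis of `L_ν` into one of `L_{ν⁻¹}`.
-/

open LieAlgebra LinearMap Module

def LieEquiv.ofBasis {R L L' ι : Type*} [CommRing R] [LieRing L] [LieAlgebra R L] [LieRing L']
    [LieAlgebra R L'] (b : Basis ι R L) (e : L ≃ₗ[R] L')
    (h : ∀ i j, e ⁅b i, b j⁆ = ⁅e (b i), e (b j)⁆) : L ≃ₗ⁅R⁆ L' :=
  { e with
    map_lie' := fun {x y} => by
      have hB : (LieModule.toEnd R L L : L →ₗ[R] L →ₗ[R] L).compr₂ e.toLinearMap =
          (LieModule.toEnd R L' L' : L' →ₗ[R] L' →ₗ[R] L').compl₁₂ e.toLinearMap e.toLinearMap :=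
        LinearMap.ext_basis b b (by simpa using h)
      simpa using LinearMap.congr_fun₂ hB x y }

theorem eq_or_eq_inv_of_mul_eq_of_sq_mul_eq {K : Type*} [Field K] (h2 : (2 : K) ≠ 0) {μ ν t : K}
    (h₁ : t * (1 + ν) = 1 + μ) (h₂ : t ^ 2 * (1 + ν ^ 2) = 1 + μ ^ 2) : μ = ν ∨ μ = ν⁻¹ := by
  have hq : t ^ 2 * ν = μ := mul_left_cancel₀ h2 <| by
    linear_combination (t * (1 + ν) + 1 + μ) * h₁ - h₂
  have ht : (t - 1) * (t - μ) = 0 := by linear_combination t * h₁ - hq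
  rcases mul_eq_zero.mp ht with ht_one | ht_μ
  · left
    linear_combination (1 + ν) * ht_one - h₁
  · right
    exact eq_inv_of_mul_eq_one_left (by linear_combination h₁ - (1 + ν) * ht_μ)

namespace Lmu

section CommRing

variable {R L L' : Type*} [CommRing R] [LieRing L] [LieAlgebra R L] [LieRing L'] [LieAlgebra R L']

/-- `(b 0, b 1, b 2)` is the basis `(α₁, α₂, β)` of `L_μ`. -/
structure IsBasis (μ : R) (b : Basis (Fin 3) R L) : Prop where
  lie_two_zero : ⁅b 2, b 0⁆ = b 0
  lie_two_one : ⁅b 2, b 1⁆ = μ • b 1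
  lie_zero_one : ⁅b 0, b 1⁆ = 0

namespace IsBasis

variable {μ : R} {b : Basis (Fin 3) R L}

lemma lie_zero_two (hb : IsBasis μ b) : ⁅b 0, b 2⁆ = -b 0 := by
  rw [← lie_skew, hb.lie_two_zero]

lemma lie_one_two (hb : IsBasis μ b) : ⁅b 1, b 2⁆ = -(μ • b 1) := by
  rw [← lie_skew, hb.lie_two_one]

lemma lie_one_zero (hb : IsBasis μ b) : ⁅b 1, b 0⁆ = 0 := by
  rw [← lie_skew, hb.lie_zero_one, neg_zero]

lemma toMatrix_ad (hb : IsBasis μ b) (x : L) :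
    toMatrix b b (ad R L x) =
      !![b.repr x 2, 0, -b.repr x 0; 0, b.repr x 2 * μ, -(b.repr x 1 * μ); 0, 0, 0] := by
  have hx : x = b.repr x 0 • b 0 + b.repr x 1 • b 1 + b.repr x 2 • b 2 :=
    (b.sum_repr x).symm.trans (Fin.sum_univ_three _)
  ext i j
  rw [toMatrix_apply, ad_apply]
  conv_lhs => rw [hx]
  fin_cases i <;> fin_cases j <;>
    simp [add_lie, smul_lie, hb.lie_two_zero, hb.lie_two_one, hb.lie_zero_one, hb.lie_zero_two,
      hb.lie_one_two, hb.lie_one_zero, mul_comm]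

lemma trace_ad (hb : IsBasis μ b) (x : L) :
    trace R L (ad R L x) = b.repr x 2 * (1 + μ) := by
  rw [trace_eq_matrix_trace R b, hb.toMatrix_ad, Matrix.trace_fin_three]
  simp
  ring

lemma killingForm_self (hb : IsBasis μ b) (x : L) :
    killingForm R L x x = b.repr x 2 ^ 2 * (1 + μ ^ 2) := by
  rw [killingForm_apply_apply, trace_eq_matrix_trace R b, toMatrix_comp b b b, hb.toMatrix_ad,
    Matrix.trace_fin_three]
  simp [Matrix.mul_apply, Fin.sum_univ_three]
  ring

noncomputable def lieEquiv {b' : Basis (Fin 3) R L'} (hb : IsBasis μ b) (hb' : IsBasis μ b') :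
    L ≃ₗ⁅R⁆ L' :=
  LieEquiv.ofBasis b (b.equiv b' (Equiv.refl _)) fun i j => by
    fin_cases i <;> fin_cases j <;>
      simp [hb.lie_two_zero, hb.lie_two_one, hb.lie_zero_one, hb.lie_zero_two, hb.lie_one_two,
        hb.lie_one_zero, hb'.lie_two_zero, hb'.lie_two_one, hb'.lie_zero_one, hb'.lie_zero_two,
        hb'.lie_one_two, hb'.lie_one_zero]

end IsBasis

end CommRing

namespace IsBasis

variable {K L L' : Type*} [Field K] [LieRing L] [LieAlgebra K L] [LieRing L'] [LieAlgebra K L']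
  {μ ν : K} {b : Basis (Fin 3) K L}

lemma exists_inv (hb : IsBasis ν b) : ∃ c : Basis (Fin 3) K L, IsBasis ν⁻¹ c := by
  rcases eq_or_ne ν 0 with rfl | hν
  · exact ⟨b, by rwa [inv_zero]⟩
  let c := (b.reindex (Equiv.swap 0 1)).unitsSMul ![1, 1, Units.mk0 ν⁻¹ (inv_ne_zero hν)]
  have hc0 : c 0 = b 1 := by simp [c, Basis.unitsSMul_apply]
  have hc1 : c 1 = b 0 := by simp [c, Basis.unitsSMul_apply]
  have hc2 : c 2 = ν⁻¹ • b 2 := by simp [c, Basis.unitsSMul_apply, Equiv.swap_apply_of_ne_of_ne]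
  refine ⟨c, ⟨?_, ?_, ?_⟩⟩ <;>
    simp [hc0, hc1, hc2, smul_lie, hb.lie_two_zero, hb.lie_two_one, hb.lie_one_zero, smul_smul, hν]

lemma eq_or_eq_inv_of_lieEquiv (h2 : (2 : K) ≠ 0) {b' : Basis (Fin 3) K L'} (hb : IsBasis μ b)
    (hb' : IsBasis ν b') (e : L ≃ₗ⁅K⁆ L') : μ = ν ∨ μ = ν⁻¹ := by
  have := Module.Finite.of_basis b
  have := Module.Free.of_basis b
  have := Module.Finite.of_basis b'
  have := Module.Free.of_basis b'
  refine eq_or_eq_inv_of_mul_eq_of_sq_mul_eq h2 (t := b'.repr (e (b 2)) 2) ?_ ?_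
  · rw [← hb'.trace_ad, ← conj_ad_apply, trace_conj', hb.trace_ad]
    simp
  · rw [← hb'.killingForm_self, killingForm_of_equiv_apply, hb.killingForm_self]
    simp

end IsBasis

end Lmu

theorem Lmu_iso_iff_general (μ ν : ℂ)
    (L L' : Type) [LieRing L] [LieAlgebra ℂ L] [LieRing L'] [LieAlgebra ℂ L']
    (b : Module.Basis (Fin 3) ℂ L) (b' : Module.Basis (Fin 3) ℂ L')
    (h1 : ⁅b 2, b 0⁆ = b 0) (h2 : ⁅b 2, b 1⁆ = μ • b 1) (h3 : ⁅b 0, b 1⁆ = 0)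
    (h1' : ⁅b' 2, b' 0⁆ = b' 0) (h2' : ⁅b' 2, b' 1⁆ = ν • b' 1) (h3' : ⁅b' 0, b' 1⁆ = 0) :
    Nonempty (L ≃ₗ⁅ℂ⁆ L') ↔ (μ = ν ∨ μ = ν⁻¹) := by
  have hb : Lmu.IsBasis μ b := ⟨h1, h2, h3⟩
  have hb' : Lmu.IsBasis ν b' := ⟨h1', h2', h3'⟩
  refine ⟨fun ⟨e⟩ => hb.eq_or_eq_inv_of_lieEquiv two_ne_zero hb' e, ?_⟩
  rintro (rfl | rfl)
  · exact ⟨hb.lieEquiv hb'⟩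
  · obtain ⟨c, hc⟩ := hb'.exists_inv
    exact ⟨hb.lieEquiv hc⟩

/-- For `μ ∈ ℂ*`, `L_μ` is the 3-dimensional complex Lie algebra with basis `{α₁, α₂, β}`
and brackets `[β,α₁] = α₁`, `[β,α₂] = μ α₂`, `[α₁,α₂] = 0`.  We state:
`L_μ ≅ L_ν` if and only if `μ = ν` or `μ = ν⁻¹`. -/
theorem Lmu_iso_iff (μ ν : ℂ) (hμ : μ ≠ 0) (hν : ν ≠ 0)
    (L L' : Type) [LieRing L] [LieAlgebra ℂ L] [LieRing L'] [LieAlgebra ℂ L']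
    (b : Module.Basis (Fin 3) ℂ L) (b' : Module.Basis (Fin 3) ℂ L')
    (h1 : ⁅b 2, b 0⁆ = b 0) (h2 : ⁅b 2, b 1⁆ = μ • b 1) (h3 : ⁅b 0, b 1⁆ = 0)
    (h1' : ⁅b' 2, b' 0⁆ = b' 0) (h2' : ⁅b' 2, b' 1⁆ = ν • b' 1) (h3' : ⁅b' 0, b' 1⁆ = 0) :
    Nonempty (L ≃ₗ⁅ℂ⁆ L') ↔ (μ = ν ∨ μ = ν⁻¹) :=
  Lmu_iso_iff_general μ ν L L' b b' h1 h2 h3 h1' h2' h3'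
end

section
/- The linear map φ: ℂQ_{m,n} → Ũ_{m,n} sending the path ρ_{j_s}^{k+σ(j₁)+⋯+σ(j_{s-1})} ⋯ ρ_{j₁}^{k} to α_{j_s}⋯α_{j₁} a_k is an algebra homomorphism. -/
/-- Generators of the modified enveloping algebra `Ũ_{m,n}`: `α₁`, `α₂` and the
idempotents `a_k` (`k ∈ ℤ`). -/
inductive UGen : Type
  | a1 : UGen
  | a2 : UGen
  | e : ℤ → UGen

/-- The defining relations of `Ũ_{m,n}`: `a_k a_ℓ = δ_{kℓ} a_k`, `α₁ a_k = a_{k+m} α₁`,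
`α₂ a_k = a_{k+n} α₂`, `α₁α₂ a_k = α₂α₁ a_k`. -/
inductive URel (m n : ℤ) : FreeAlgebra ℂ UGen → FreeAlgebra ℂ UGen → Prop
  | idem (k l : ℤ) : URel m n (FreeAlgebra.ι ℂ (UGen.e k) * FreeAlgebra.ι ℂ (UGen.e l))
      (if k = l then FreeAlgebra.ι ℂ (UGen.e k) else 0)
  | c1 (k : ℤ) : URel m n (FreeAlgebra.ι ℂ UGen.a1 * FreeAlgebra.ι ℂ (UGen.e k))
      (FreeAlgebra.ι ℂ (UGen.e (k + m)) * FreeAlgebra.ι ℂ UGen.a1)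
  | c2 (k : ℤ) : URel m n (FreeAlgebra.ι ℂ UGen.a2 * FreeAlgebra.ι ℂ (UGen.e k))
      (FreeAlgebra.ι ℂ (UGen.e (k + n)) * FreeAlgebra.ι ℂ UGen.a2)
  | c12 (k : ℤ) : URel m n
      (FreeAlgebra.ι ℂ UGen.a1 * FreeAlgebra.ι ℂ UGen.a2 * FreeAlgebra.ι ℂ (UGen.e k))
      (FreeAlgebra.ι ℂ UGen.a2 * FreeAlgebra.ι ℂ UGen.a1 * FreeAlgebra.ι ℂ (UGen.e k))

/-- The modified enveloping algebra `Ũ_{m,n}`. -/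
abbrev ModifiedEnveloping (m n : ℤ) : Type := RingQuot (URel m n)

/-- `α₁, α₂ ∈ Ũ_{m,n}` (`uAlpha 0` and `uAlpha 1` resp.). -/
noncomputable def uAlpha (m n : ℤ) (j : Fin 2) : ModifiedEnveloping m n :=
  RingQuot.mkAlgHom ℂ (URel m n) (FreeAlgebra.ι ℂ (if j = 0 then UGen.a1 else UGen.a2))

/-- The idempotent `a_k ∈ Ũ_{m,n}`. -/
noncomputable def uA (m n : ℤ) (k : ℤ) : ModifiedEnveloping m n :=
  RingQuot.mkAlgHom ℂ (URel m n) (FreeAlgebra.ι ℂ (UGen.e k))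

/-- Generators of the path algebra `ℂQ_{m,n}`: trivial paths `e_k` and arrows
`ρ_j^k : k → k + σ(j)` (`σ(0) = m`, `σ(1) = n`). -/
inductive PGen : Type
  | e : ℤ → PGen
  | r : Fin 2 → ℤ → PGen

/-- `σ(0) = m`, `σ(1) = n`. -/
def sigmaMN (m n : ℤ) (j : Fin 2) : ℤ := if j = 0 then m else n

/-- The defining relations of the path algebra `ℂQ_{m,n}`: the trivial paths are
orthogonal idempotents and units for the arrows at their tails and heads. -/
inductive PRel (m n : ℤ) : FreeAlgebra ℂ PGen → FreeAlgebra ℂ PGen → Prop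
  | vert (k l : ℤ) : PRel m n (FreeAlgebra.ι ℂ (PGen.e k) * FreeAlgebra.ι ℂ (PGen.e l))
      (if k = l then FreeAlgebra.ι ℂ (PGen.e k) else 0)
  | tail (j : Fin 2) (k : ℤ) :
      PRel m n (FreeAlgebra.ι ℂ (PGen.r j k) * FreeAlgebra.ι ℂ (PGen.e k))
        (FreeAlgebra.ι ℂ (PGen.r j k))
  | head (j : Fin 2) (k : ℤ) :
      PRel m n (FreeAlgebra.ι ℂ (PGen.e (k + sigmaMN m n j)) * FreeAlgebra.ι ℂ (PGen.r j k))
        (FreeAlgebra.ι ℂ (PGen.r j k))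

/-- The path algebra `ℂQ_{m,n}` of the quiver `Q_{m,n}`. -/
abbrev PathAlg (m n : ℤ) : Type := RingQuot (PRel m n)

/-- The arrow `ρ_j^k` as an element of `ℂQ_{m,n}`. -/
noncomputable def pR (m n : ℤ) (j : Fin 2) (k : ℤ) : PathAlg m n :=
  RingQuot.mkAlgHom ℂ (PRel m n) (FreeAlgebra.ι ℂ (PGen.r j k))

/-- The trivial path `e_k` as an element of `ℂQ_{m,n}`. -/
noncomputable def pE (m n : ℤ) (k : ℤ) : PathAlg m n :=
  RingQuot.mkAlgHom ℂ (PRel m n) (FreeAlgebra.ι ℂ (PGen.e k))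

/-- The path `ρ_{j_s}^{k+σ(j₁)+⋯+σ(j_{s-1})} ⋯ ρ_{j₁}^k` in `ℂQ_{m,n}`, for the word
`w = [j₁, …, j_s]` starting at the vertex `k`. -/
noncomputable def pathProd (m n : ℤ) : ℤ → List (Fin 2) → PathAlg m n
  | k, [] => pE m n k
  | k, j :: w => pathProd m n (k + sigmaMN m n j) w * pR m n j k

/-- The element `α_{j_s} ⋯ α_{j₁} ∈ Ũ_{m,n}` for the word `w = [j₁, …, j_s]`. -/
noncomputable def alphaWord (m n : ℤ) : List (Fin 2) → ModifiedEnveloping m n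
  | [] => 1
  | j :: w => alphaWord m n w * uAlpha m n j

/-! The assignment `e_k ↦ a_k`, `ρ_j^k ↦ α_j a_k` respects the relations of the path algebra,
because the `a_k` are orthogonal idempotents and `α_j a_k = a_{k+σ(j)} α_j`; so it defines an
algebra homomorphism on `ℂQ_{m,n}`. Using the same commutation to move each idempotent to the
right end shows that it sends the path of a word `w` from `k` to `α_w a_k`. -/

namespace ModifiedEnveloping

variable (m n : ℤ)

theorem uA_mul_uA (k l : ℤ) :
    uA m n k * uA m n l = if k = l then uA m n k else 0 := by
  simpa [uA, apply_ite (RingQuot.mkAlgHom ℂ (URel m n))] using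
    RingQuot.mkAlgHom_rel ℂ (URel.idem (m := m) (n := n) k l)

theorem uA_mul_self (k : ℤ) : uA m n k * uA m n k = uA m n k := by
  rw [uA_mul_uA, if_pos rfl]

theorem uAlpha_mul_uA (j : Fin 2) (k : ℤ) :
    uAlpha m n j * uA m n k = uA m n (k + sigmaMN m n j) * uAlpha m n j := by
  fin_cases j
  · simpa [uA, uAlpha, sigmaMN] using RingQuot.mkAlgHom_rel ℂ (URel.c1 (m := m) (n := n) k)
  · simpa [uA, uAlpha, sigmaMN] using RingQuot.mkAlgHom_rel ℂ (URel.c2 (m := m) (n := n) k)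

theorem uA_mul_uAlpha_mul_uA (j : Fin 2) (k : ℤ) :
    uA m n (k + sigmaMN m n j) * (uAlpha m n j * uA m n k) = uAlpha m n j * uA m n k := by
  rw [uAlpha_mul_uA, ← mul_assoc, uA_mul_self]

end ModifiedEnveloping

namespace PathAlg

open ModifiedEnveloping

variable (m n : ℤ)

noncomputable def genToModifiedEnveloping : PGen → ModifiedEnveloping m n
  | .e k => uA m n k
  | .r j k => uAlpha m n j * uA m n k

theorem lift_genToModifiedEnveloping_rel ⦃x y : FreeAlgebra ℂ PGen⦄ (h : PRel m n x y) :
    FreeAlgebra.lift ℂ (genToModifiedEnveloping m n) x =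
      FreeAlgebra.lift ℂ (genToModifiedEnveloping m n) y := by
  cases h with
  | vert k l =>
    simpa only [map_mul, apply_ite (FreeAlgebra.lift ℂ (genToModifiedEnveloping m n)), map_zero,
      FreeAlgebra.lift_ι_apply, genToModifiedEnveloping] using uA_mul_uA m n k l
  | tail j k =>
    simp only [map_mul, FreeAlgebra.lift_ι_apply, genToModifiedEnveloping]
    rw [mul_assoc, uA_mul_self]
  | head j k =>
    simpa only [map_mul, FreeAlgebra.lift_ι_apply, genToModifiedEnveloping] using
      uA_mul_uAlpha_mul_uA m n j k

noncomputable def toModifiedEnveloping : PathAlg m n →ₐ[ℂ] ModifiedEnveloping m n :=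
  RingQuot.liftAlgHom ℂ ⟨FreeAlgebra.lift ℂ (genToModifiedEnveloping m n),
    lift_genToModifiedEnveloping_rel m n⟩

theorem toModifiedEnveloping_pE (k : ℤ) : toModifiedEnveloping m n (pE m n k) = uA m n k := by
  simp [toModifiedEnveloping, pE, RingQuot.liftAlgHom_mkAlgHom_apply, genToModifiedEnveloping]

theorem toModifiedEnveloping_pR (j : Fin 2) (k : ℤ) :
    toModifiedEnveloping m n (pR m n j k) = uAlpha m n j * uA m n k := by
  simp [toModifiedEnveloping, pR, RingQuot.liftAlgHom_mkAlgHom_apply, genToModifiedEnveloping]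

theorem toModifiedEnveloping_pathProd (k : ℤ) (w : List (Fin 2)) :
    toModifiedEnveloping m n (pathProd m n k w) = alphaWord m n w * uA m n k := by
  induction w generalizing k with
  | nil => simp [pathProd, alphaWord, toModifiedEnveloping_pE]
  | cons j w ih =>
    rw [pathProd, alphaWord, map_mul, ih, toModifiedEnveloping_pR, mul_assoc,
      uA_mul_uAlpha_mul_uA, mul_assoc]

end PathAlg

/-- The linear map `φ : ℂQ_{m,n} → Ũ_{m,n}` sending the path
`ρ_{j_s}^{k+σ(j₁)+⋯+σ(j_{s-1})} ⋯ ρ_{j₁}^k` to `α_{j_s}⋯α_{j₁} a_k` is an algebra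
homomorphism. -/
theorem path_to_modified_env_hom (m n : ℤ) :
    ∃ φ : PathAlg m n →ₐ[ℂ] ModifiedEnveloping m n,
      ∀ (k : ℤ) (w : List (Fin 2)),
        φ (pathProd m n k w) = alphaWord m n w * uA m n k :=
  ⟨PathAlg.toModifiedEnveloping m n, PathAlg.toModifiedEnveloping_pathProd m n⟩
end

section
/- Let φ: Q → Q' be a covering morphism. For any path τ' in Q' and any representation V of Q, φ_!(V)(τ') = ⊕_{y : φ(y) = h(τ')} V(φ⁻¹(τ')_y), where φ⁻¹(τ')_y denotes the unique lift of τ' ending at y. -/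
/-
Induction on the path. Lifts along a covering are unique, so the lift of `p.cons e` ending at `y`
is the lift of `p` ending at the tail `z` of the lift `ζ` of `e`, followed by `ζ`. Hence the
`y`-component of `φ_!(V)(p.cons e) v` is `V(ζ)` applied to the `z`-component of `φ_!(V)(p) v`,
which by induction is `V(lift of p)` applied to a component of `v`.
-/

open DirectSum

/-- A quiver morphism `φ : Q → Q'` is a covering morphism if for every vertex `x` of `Q`
and every path `τ'` in `Q'` with head `φ(x)`, there is a unique path `τ` in `Q` with
head `x` such that `φ(τ) = τ'`. -/
def IsCovering {Q Q' : Type} [Quiver.{1} Q] [Quiver.{1} Q'] (φ : Q ⥤q Q') : Prop :=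
  ∀ (x : Q) (a' : Q') (τ' : Quiver.Path a' (φ.obj x)),
    ∃! p : Σ a : Q, Quiver.Path a x,
      (⟨φ.obj p.1, φ.mapPath p.2⟩ : Σ b : Q', Quiver.Path b (φ.obj x)) = ⟨a', τ'⟩

variable {Q Q' : Type} [Quiver.{1} Q] [Quiver.{1} Q'] (φ : Q ⥤q Q')

/-- The fiber of a quiver morphism `φ` over a vertex `x'` of `Q'`. -/
abbrev Fib (x' : Q') : Type := {x : Q // φ.obj x = x'}

/-- The unique lift (with prescribed head `x`) of a path `τ'` along a covering morphism:
`φ⁻¹(τ')_x`, bundled with its tail. -/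
noncomputable def pLift (hφ : IsCovering φ) {a' : Q'} (x : Q)
    (τ' : Quiver.Path a' (φ.obj x)) : Σ a : Q, Quiver.Path a x :=
  (hφ x a' τ').exists.choose

theorem pLift_fst (hφ : IsCovering φ) {a' : Q'} (x : Q)
    (τ' : Quiver.Path a' (φ.obj x)) : φ.obj (pLift φ hφ x τ').1 = a' :=
  congrArg Sigma.fst (hφ x a' τ').exists.choose_spec

/-- The composite of the structure maps of a representation along a path:
`V(τ) = V(ρ_n) ⋯ V(ρ₁)` for `τ = ρ_n ⋯ ρ₁`. -/
def composeAlong {Q : Type} [Quiver.{1} Q] {M : Q → Type}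
    [∀ x, AddCommGroup (M x)] [∀ x, Module ℂ (M x)]
    (Vmap : ∀ x y : Q, (x ⟶ y) → (M x →ₗ[ℂ] M y)) :
    ∀ {a b : Q}, Quiver.Path a b → (M a →ₗ[ℂ] M b)
  | _, _, Quiver.Path.nil => LinearMap.id
  | _, _, Quiver.Path.cons p e => (Vmap _ _ e).comp (composeAlong Vmap p)

variable (M : Q → Type) [∀ x, AddCommGroup (M x)] [∀ x, Module ℂ (M x)]

section Lifts

variable {φ}

def IsLift {a' : Q'} {x : Q} (q : Σ a : Q, Quiver.Path a x)
    (τ' : Quiver.Path a' (φ.obj x)) : Prop :=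
  (⟨φ.obj q.1, φ.mapPath q.2⟩ : Σ b : Q', Quiver.Path b (φ.obj x)) = ⟨a', τ'⟩

theorem IsLift.obj_fst_eq {a' : Q'} {x : Q} {q : Σ a : Q, Quiver.Path a x}
    {τ' : Quiver.Path a' (φ.obj x)} (h : IsLift q τ') : φ.obj q.1 = a' :=
  congrArg Sigma.fst h

theorem isLift_nil (x : Q) : IsLift (φ := φ) ⟨x, Quiver.Path.nil⟩ Quiver.Path.nil :=
  rfl

theorem IsLift.comp {a' : Q'} {w z y : Q} {σ : Quiver.Path w z} {ζ : Quiver.Path z y}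
    {p : Quiver.Path a' (φ.obj z)} {q : Quiver.Path (φ.obj z) (φ.obj y)}
    (hσ : IsLift ⟨w, σ⟩ p) (hζ : IsLift ⟨z, ζ⟩ q) : IsLift ⟨w, σ.comp ζ⟩ (p.comp q) := by
  have hζ' : φ.mapPath ζ = q := eq_of_heq (Sigma.mk.inj hζ).2
  cases hσ
  simp only [IsLift, Prefunctor.mapPath_comp, hζ']

theorem exists_isLift (hφ : IsCovering φ) {a' : Q'} {x : Q} (τ' : Quiver.Path a' (φ.obj x)) :
    ∃ q, IsLift q τ' :=
  (hφ x a' τ').exists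

theorem pLift_eq_of_isLift (hφ : IsCovering φ) {a' : Q'} {x : Q}
    {τ' : Quiver.Path a' (φ.obj x)} {q : Σ a : Q, Quiver.Path a x} (h : IsLift q τ') :
    pLift φ hφ x τ' = q :=
  (hφ x a' τ').unique (hφ x a' τ').exists.choose_spec h

end Lifts

section Evaluation

variable {φ M}

theorem composeAlong_comp (Vmap : ∀ x y : Q, (x ⟶ y) → (M x →ₗ[ℂ] M y))
    {a b c : Q} (p : Quiver.Path a b) (q : Quiver.Path b c) :
    composeAlong Vmap (p.comp q) = (composeAlong Vmap q).comp (composeAlong Vmap p) := by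
  induction q with
  | nil => rw [Quiver.Path.comp_nil, composeAlong, LinearMap.id_comp]
  | cons q e ih => simp only [Quiver.Path.comp_cons, composeAlong, ih, LinearMap.comp_assoc]

theorem composeAlong_apply_congr_sigma (Vmap : ∀ x y : Q, (x ⟶ y) → (M x →ₗ[ℂ] M y))
    {a' : Q'} {x : Q} {q r : Σ a : Q, Quiver.Path a x} (hqr : q = r)
    (hq : φ.obj q.1 = a') (hr : φ.obj r.1 = a') (v : ⨁ x : Fib φ a', M x.1) :
    composeAlong Vmap q.2 (v ⟨q.1, hq⟩) = composeAlong Vmap r.2 (v ⟨r.1, hr⟩) := by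
  subst hqr; rfl

theorem composeAlong_pLift_apply (hφ : IsCovering φ)
    (Vmap : ∀ x y : Q, (x ⟶ y) → (M x →ₗ[ℂ] M y))
    {a' : Q'} {x : Q} {τ' : Quiver.Path a' (φ.obj x)} {a : Q} {τ : Quiver.Path a x}
    (h : IsLift ⟨a, τ⟩ τ') (v : ⨁ x : Fib φ a', M x.1) :
    composeAlong Vmap (pLift φ hφ x τ').2 (v ⟨(pLift φ hφ x τ').1, pLift_fst φ hφ x τ'⟩)
      = composeAlong Vmap τ (v ⟨a, h.obj_fst_eq⟩) :=
  composeAlong_apply_congr_sigma Vmap (pLift_eq_of_isLift hφ h) _ _ v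

end Evaluation

/-- Let `φ : Q → Q'` be a covering morphism, `V` a representation of `Q`, and let `W` be
the representation `φ_!(V)` of `Q'` (so `W(x') = ⊕_{x ∈ φ⁻¹(x')} V(x)` and on an arrow
`ρ'` the `y`-component of `W(ρ')v` is `V(φ⁻¹(ρ')_y)` applied to the component of `v` at
the tail of the lift).  Then for every path `τ'` in `Q'`,
`φ_!(V)(τ') = ⊕_{y : φ(y) = h(τ')} V(φ⁻¹(τ')_y)`: the `y`-component of `W(τ')v` is
`V(φ⁻¹(τ')_y)` applied to the component of `v` at the tail of the lifted path. -/
theorem phiShriek_on_paths (hφ : IsCovering φ)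
    (Vmap : ∀ x y : Q, (x ⟶ y) → (M x →ₗ[ℂ] M y))
    (Wmap : ∀ x' y' : Q', (x' ⟶ y') →
      ((⨁ x : Fib φ x', M x.1) →ₗ[ℂ] (⨁ y : Fib φ y', M y.1)))
    (hW : ∀ (x' y' : Q') (ρ' : x' ⟶ y') (v : ⨁ x : Fib φ x', M x.1) (y : Fib φ y'),
      Wmap x' y' ρ' v y =
        composeAlong Vmap (pLift φ hφ y.1 (y.2.symm ▸ ρ'.toPath)).2
          (v ⟨(pLift φ hφ y.1 (y.2.symm ▸ ρ'.toPath)).1,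
              pLift_fst φ hφ y.1 (y.2.symm ▸ ρ'.toPath)⟩)) :
    ∀ (a' b' : Q') (τ' : Quiver.Path a' b') (v : ⨁ x : Fib φ a', M x.1) (y : Fib φ b'),
      composeAlong Wmap τ' v y =
        composeAlong Vmap (pLift φ hφ y.1 (y.2.symm ▸ τ')).2
          (v ⟨(pLift φ hφ y.1 (y.2.symm ▸ τ')).1,
              pLift_fst φ hφ y.1 (y.2.symm ▸ τ')⟩) := by
  intro a' b' τ'
  induction τ' with
  | nil =>
    rintro v ⟨y, rfl⟩
    have h := composeAlong_pLift_apply hφ Vmap (isLift_nil y) v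
    simpa only [composeAlong, LinearMap.id_apply] using h.symm
  | @cons c' b' p e ih =>
    rintro v ⟨y, rfl⟩
    obtain ⟨⟨z, ζ⟩, hζ⟩ := exists_isLift hφ e.toPath
    obtain rfl : φ.obj z = c' := hζ.obj_fst_eq
    obtain ⟨⟨w, σ⟩, hσ⟩ := exists_isLift hφ p
    calc composeAlong Wmap (p.cons e) v ⟨y, rfl⟩
        = composeAlong Vmap ζ (composeAlong Wmap p v ⟨z, rfl⟩) := by
          rw [composeAlong, LinearMap.comp_apply, hW]
          exact composeAlong_pLift_apply hφ Vmap hζ _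
      _ = composeAlong Vmap ζ (composeAlong Vmap σ (v ⟨w, hσ.obj_fst_eq⟩)) := by
          rw [ih v ⟨z, rfl⟩]
          exact congrArg _ (composeAlong_pLift_apply hφ Vmap hσ v)
      _ = _ := by
          rw [← LinearMap.comp_apply, ← composeAlong_comp]
          exact (composeAlong_pLift_apply hφ Vmap (hσ.comp hζ) v).symm
end
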